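/- With the notation of the deformation datum, the cone σ̃ ⊆ ℝⁿ × ℝᵏ is strongly convex: σ̃ ∩ (−σ̃) = {0}. -/

import Mathlib

open Set Pointwise

/-- The conical hull of a set `S`: all finite nonnegative linear combinations of
elements of `S`. -/
def coneHull {V : Type*} [AddCommMonoid V] [Module ℝ V] (S : Set V) : Set V :=
  {x | ∃ (m : ℕ) (c : Fin m → ℝ) (v : Fin m → V),
    (∀ i, 0 ≤ c i) ∧ (∀ i, v i ∈ S) ∧ x = ∑ i, c i • v i}

/-- A vector of `ℝᵐ` is integral if all of its coordinates are integers, i.e. it lies in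
the lattice `ℤᵐ`. -/
def IsIntegralVec {m : ℕ} (v : Fin m → ℝ) : Prop := ∀ j, ∃ z : ℤ, v j = (z : ℝ)

/-- A vector of `ℝᵐ` is rational if all of its coordinates are rational, i.e. it lies in
`ℚᵐ`. -/
def IsRationalVec {m : ℕ} (v : Fin m → ℝ) : Prop := ∀ j, ∃ q : ℚ, v j = (q : ℝ)

/-- The standard pairing `⟨u, v⟩ = ∑ j, u j * v j` on `ℝᵐ`. -/
def dot {m : ℕ} (u v : Fin m → ℝ) : ℝ := ∑ j, u j * v j

/-- A deformation datum for `(ℤⁿ, σ)` (Mavlyutov/Altmann): a Minkowski decomposition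
`Q = Q₀ + Q₁ + ⋯ + Q_k` of a polyhedron `Q` inside the full-dimensional strongly convex
rational polyhedral cone `σ ⊆ ℝⁿ`, together with an integral functional `w`, subject to
conditions (i), (ii), (iii), (iv'), (v), (vi). The sets `Q₀, …, Q_k` are indexed by
`Fin (k+1)`, and `Qᵢ = conv(Vᵢ) + coneHull(Rᵢ)` with `Vᵢ` a finite nonempty set of
rational points equal to the set of extreme points of `Qᵢ` and `Rᵢ` a finite set of
rational points. -/
structure DeformationDatum (n k : ℕ) where
  /-- Finite set of lattice generators of `σ`. -/
  S₀ : Finset (Fin n → ℝ)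
  hS₀ : ∀ v ∈ S₀, IsIntegralVec v
  /-- The cone `σ`. -/
  σ : Set (Fin n → ℝ)
  hσ : σ = coneHull (S₀ : Set (Fin n → ℝ))
  /-- `σ` is full-dimensional. -/
  hspan : Submodule.span ℝ σ = ⊤
  /-- `σ` is strongly convex. -/
  hsc : σ ∩ (-σ) = {0}
  /-- The integral functional `w`. -/
  w : Fin n → ℝ
  hw : IsIntegralVec w
  /-- Vertex sets `V₀, …, V_k`. -/
  V : Fin (k + 1) → Finset (Fin n → ℝ)
  /-- Recession generator sets `R₀, …, R_k`. -/
  R : Fin (k + 1) → Finset (Fin n → ℝ)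
  hVne : ∀ i, (V i).Nonempty
  hVQ : ∀ i, ∀ v ∈ V i, IsRationalVec v
  hRQ : ∀ i, ∀ v ∈ R i, IsRationalVec v
  /-- The summands `Q₀, …, Q_k`. -/
  Qi : Fin (k + 1) → Set (Fin n → ℝ)
  hQi : ∀ i, Qi i = convexHull ℝ (V i : Set (Fin n → ℝ)) + coneHull (R i : Set (Fin n → ℝ))
  hVext : ∀ i, (V i : Set (Fin n → ℝ)) = Set.extremePoints ℝ (Qi i)
  /-- The polyhedron `Q`. -/
  Q : Set (Fin n → ℝ)
  /-- (i) `Q ⊆ σ`. -/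
  h1 : Q ⊆ σ
  /-- (ii) `0 ∉ Q`. -/
  h2 : (0 : Fin n → ℝ) ∉ Q
  /-- (iii) `Q = Q₀ + Q₁ + ⋯ + Q_k`. -/
  h3 : Q = ∑ i : Fin (k + 1), Qi i
  /-- (iv') every extreme point of `Q` decomposes as a sum of extreme points of the `Qᵢ`,
  at most one of which is non-integral. -/
  h4' : ∀ v ∈ Set.extremePoints ℝ Q, ∃ vi : Fin (k + 1) → (Fin n → ℝ),
    (∀ i, vi i ∈ Set.extremePoints ℝ (Qi i)) ∧ v = ∑ i, vi i ∧
    ({i | ¬ IsIntegralVec (vi i)} : Set (Fin (k + 1))).Subsingleton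
  /-- (v) the minimum of `⟨w, ·⟩` on `Q` is attained and is `≥ -1`. -/
  h5 : ∃ μ : ℝ, IsLeast ((fun x => dot w x) '' Q) μ ∧ -1 ≤ μ
  /-- (vi) every extreme point of `σ ∩ {⟨w, ·⟩ = -1}` lies in `ℝ⁺ · Q`. -/
  h6 : ∀ v ∈ Set.extremePoints ℝ (σ ∩ {x | dot w x = -1}),
    ∃ lam : ℝ, ∃ q ∈ Q, 0 < lam ∧ v = lam • q

/-- The generating set of the cone `σ̃ ⊆ ℝⁿ × ℝᵏ`:
`(σ × {0}) ∪ {(q, -e₁-⋯-e_k) : q ∈ Q₀} ∪ {(q, eᵢ) : q ∈ Qᵢ, i = 1, …, k}`. -/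
def tildeGens {n k : ℕ} (D : DeformationDatum n k) : Set ((Fin n → ℝ) × (Fin k → ℝ)) :=
  (D.σ ×ˢ ({0} : Set (Fin k → ℝ)))
    ∪ {p | p.1 ∈ D.Qi 0 ∧ p.2 = fun _ => (-1 : ℝ)}
    ∪ ⋃ i : Fin k, {p | p.1 ∈ D.Qi i.succ ∧ p.2 = Pi.single i 1}

/-- The cone `σ̃ ⊆ ℝⁿ × ℝᵏ` associated to a deformation datum. -/
def tildeSigma {n k : ℕ} (D : DeformationDatum n k) : Set ((Fin n → ℝ) × (Fin k → ℝ)) :=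
  coneHull (tildeGens D)

section ConeHullLemmas

variable {V : Type*} [AddCommMonoid V] [Module ℝ V] {S : Set V}

theorem zero_mem_coneHull : (0 : V) ∈ coneHull S :=
  ⟨0, Fin.elim0, Fin.elim0, fun i => i.elim0, fun i => i.elim0, by simp⟩

theorem mem_coneHull_of_mem {x : V} (hx : x ∈ S) : x ∈ coneHull S :=
  ⟨1, fun _ => 1, fun _ => x, fun _ => zero_le_one, fun _ => hx, by simp⟩

theorem coneHull_add_mem {x y : V} (hx : x ∈ coneHull S) (hy : y ∈ coneHull S) :
    x + y ∈ coneHull S := by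
  obtain ⟨m, c, v, hc, hv, rfl⟩ := hx
  obtain ⟨m', c', v', hc', hv', rfl⟩ := hy
  refine ⟨m + m', Fin.addCases c c', Fin.addCases v v', ?_, ?_, ?_⟩
  · intro i
    induction i using Fin.addCases with
    | left i => simpa using hc i
    | right i => simpa using hc' i
  · intro i
    induction i using Fin.addCases with
    | left i => simpa using hv i
    | right i => simpa using hv' i
  · rw [Fin.sum_univ_add]
    simp

theorem coneHull_smul_mem {a : ℝ} (ha : 0 ≤ a) {x : V} (hx : x ∈ coneHull S) :
    a • x ∈ coneHull S := by
  obtain ⟨m, c, v, hc, hv, rfl⟩ := hx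
  exact ⟨m, fun i => a * c i, v, fun i => mul_nonneg ha (hc i), hv, by
    rw [Finset.smul_sum]; simp [mul_smul]⟩

theorem coneHull_convex : Convex ℝ (coneHull S) := fun x hx y hy a b ha hb _ =>
  coneHull_add_mem (coneHull_smul_mem ha hx) (coneHull_smul_mem hb hy)

theorem mem_set_sum {ι : Type*} [DecidableEq ι] (s : Finset ι) (f : ι → Set V) (g : ι → V)
    (h : ∀ i ∈ s, g i ∈ f i) : ∑ i ∈ s, g i ∈ ∑ i ∈ s, f i := by
  induction s using Finset.induction with
  | empty => simp
  | insert _ _ hnot ih =>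
    rw [Finset.sum_insert hnot, Finset.sum_insert hnot]
    exact Set.add_mem_add (h _ (Finset.mem_insert_self _ _))
      (ih fun i hi => h i (Finset.mem_insert_of_mem hi))

end ConeHullLemmas

section DDLemmas

variable {n k : ℕ} (D : DeformationDatum n k)

theorem Qi_convex (i : Fin (k + 1)) : Convex ℝ (D.Qi i) := by
  rw [D.hQi]
  exact (convex_convexHull ℝ _).add coneHull_convex

theorem Qi_nonempty (i : Fin (k + 1)) : (D.Qi i).Nonempty := by
  obtain ⟨v, hv⟩ := D.hVne i
  refine ⟨v + 0, ?_⟩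
  rw [D.hQi]
  exact Set.add_mem_add (subset_convexHull ℝ _ hv) zero_mem_coneHull

theorem sigma_add_mem {x y : Fin n → ℝ} (hx : x ∈ D.σ) (hy : y ∈ D.σ) : x + y ∈ D.σ := by
  rw [D.hσ] at *
  exact coneHull_add_mem hx hy

theorem sigma_smul_mem {a : ℝ} (ha : 0 ≤ a) {x : Fin n → ℝ} (hx : x ∈ D.σ) : a • x ∈ D.σ := by
  rw [D.hσ] at *
  exact coneHull_smul_mem ha hx

theorem sigma_zero_mem : (0 : Fin n → ℝ) ∈ D.σ := by
  rw [D.hσ]; exact zero_mem_coneHull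

/-- Normal form for elements of `σ̃`. -/
def NF (x : (Fin n → ℝ) × (Fin k → ℝ)) : Prop :=
  ∃ s ∈ D.σ, ∃ t : Fin (k + 1) → ℝ, ∃ y : Fin (k + 1) → (Fin n → ℝ),
    (∀ i, 0 ≤ t i) ∧ (∀ i, y i ∈ D.Qi i) ∧
    x.1 = s + ∑ i, t i • y i ∧ ∀ j : Fin k, x.2 j = t j.succ - t 0

theorem NF_zero : NF D 0 := by
  classical
  choose y hy using Qi_nonempty D
  exact ⟨0, sigma_zero_mem D, 0, y, fun i => le_refl 0, hy, by simp, by simp⟩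

theorem NF_add {x y : (Fin n → ℝ) × (Fin k → ℝ)} (hx : NF D x) (hy : NF D y) :
    NF D (x + y) := by
  classical
  obtain ⟨s, hs, t, u, ht, hu, hx1, hx2⟩ := hx
  obtain ⟨s', hs', t', u', ht', hu', hy1, hy2⟩ := hy
  refine ⟨s + s', sigma_add_mem D hs hs', t + t',
    fun i => if h : 0 < t i + t' i then
      (t i / (t i + t' i)) • u i + (t' i / (t i + t' i)) • u' i else u i,
    fun i => add_nonneg (ht i) (ht' i), ?_, ?_, ?_⟩
  · intro i
    by_cases h : 0 < t i + t' i
    · simp only [dif_pos h]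
      exact Qi_convex D i (hu i) (hu' i)
        (div_nonneg (ht i) h.le) (div_nonneg (ht' i) h.le)
        (by rw [← add_div, div_self h.ne'])
    · simp only [dif_neg h]; exact hu i
  · have key : ∀ i, (t + t') i •
        (if h : 0 < t i + t' i then
          (t i / (t i + t' i)) • u i + (t' i / (t i + t' i)) • u' i else u i)
        = t i • u i + t' i • u' i := by
      intro i
      by_cases h : 0 < t i + t' i
      · rw [dif_pos h]
        simp only [Pi.add_apply, smul_add, smul_smul]
        rw [mul_div_cancel₀ _ h.ne', mul_div_cancel₀ _ h.ne']
      · rw [dif_neg h]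
        have h0 : t i = 0 ∧ t' i = 0 := by
          constructor <;> nlinarith [ht i, ht' i, not_lt.mp h]
        simp [Pi.add_apply, h0.1, h0.2]
    show (x + y).1 = _
    rw [Prod.fst_add, hx1, hy1, Finset.sum_congr rfl (fun i _ => key i),
      Finset.sum_add_distrib]
    abel
  · intro j
    show (x + y).2 j = _
    rw [Prod.snd_add, Pi.add_apply, hx2 j, hy2 j]
    simp only [Pi.add_apply]
    ring

theorem NF_smul {a : ℝ} (ha : 0 ≤ a) {x : (Fin n → ℝ) × (Fin k → ℝ)} (hx : NF D x) :
    NF D (a • x) := by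
  obtain ⟨s, hs, t, u, ht, hu, hx1, hx2⟩ := hx
  refine ⟨a • s, sigma_smul_mem D ha hs, a • t, u,
    fun i => mul_nonneg ha (ht i), hu, ?_, ?_⟩
  · show a • x.1 = _
    rw [hx1, smul_add, Finset.smul_sum]
    simp [smul_smul]
  · intro j
    show a • x.2 j = _
    simp only [Pi.smul_apply, smul_eq_mul, hx2 j]
    ring

theorem NF_gens {x : (Fin n → ℝ) × (Fin k → ℝ)} (hx : x ∈ tildeGens D) : NF D x := by
  classical
  choose y0 hy0 using Qi_nonempty D
  rcases hx with (⟨hx1, hx2⟩ | ⟨hx1, hx2⟩) | hx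
  · -- x ∈ σ × {0}
    refine ⟨x.1, hx1, 0, y0, fun i => le_refl 0, hy0, by simp, fun j => ?_⟩
    have : x.2 = 0 := hx2
    simp [this]
  · -- x = (q, -1)
    refine ⟨0, sigma_zero_mem D, Pi.single 0 1,
      Function.update y0 0 x.1, fun i => ?_, fun i => ?_, ?_, fun j => ?_⟩
    · by_cases h : i = 0 <;> simp [Pi.single_apply, h]
    · by_cases h : i = 0
      · subst h; simpa using hx1
      · simp [Function.update_of_ne h]; exact hy0 i
    · rw [Finset.sum_eq_single 0]
      · simp
      · intro b _ hb; simp [Pi.single_apply, hb]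
      · simp
    · rw [hx2]
      have h1 : (Pi.single (0 : Fin (k+1)) (1:ℝ) : Fin (k+1) → ℝ) j.succ = 0 := by
        simp [Pi.single_apply, Fin.succ_ne_zero j]
      simp [h1]
  · -- x = (q, eᵢ)
    simp only [Set.mem_iUnion] at hx
    obtain ⟨i, hx1, hx2⟩ := hx
    refine ⟨0, sigma_zero_mem D, (Pi.single i.succ 1 : Fin (k+1) → ℝ),
      Function.update y0 i.succ x.1, fun l => ?_, fun l => ?_, ?_, fun j => ?_⟩
    · by_cases h : l = i.succ <;> simp [Pi.single_apply, h]
    · by_cases h : l = i.succ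
      · subst h; simpa using hx1
      · simp [Function.update_of_ne h]; exact hy0 l
    · rw [Finset.sum_eq_single i.succ]
      · simp
      · intro b _ hb; simp [Pi.single_apply, hb]
      · simp
    · rw [hx2]
      have h0 : (Pi.single i.succ (1:ℝ) : Fin (k+1) → ℝ) 0 = 0 := by
        simp [Pi.single_apply, (Fin.succ_ne_zero i).symm]
      have h1 : (Pi.single i.succ (1:ℝ) : Fin (k+1) → ℝ) j.succ
          = if j = i then (1:ℝ) else 0 := by
        simp [Pi.single_apply, Fin.succ_inj]
      have h2 : (Pi.single i (1:ℝ) : Fin k → ℝ) j = if j = i then (1:ℝ) else 0 := by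
        simp [Pi.single_apply]
      rw [h2, h1, h0]
      ring

theorem NF_of_mem_tildeSigma {x : (Fin n → ℝ) × (Fin k → ℝ)} (hx : x ∈ tildeSigma D) :
    NF D x := by
  obtain ⟨m, c, v, hc, hv, rfl⟩ := hx
  have : ∀ (m : ℕ) (f : Fin m → (Fin n → ℝ) × (Fin k → ℝ)),
      (∀ i, NF D (f i)) → NF D (∑ i, f i) := by
    intro m
    induction m with
    | zero => intro f _; simpa using NF_zero D
    | succ m ih =>
      intro f hf
      rw [Fin.sum_univ_succ]
      exact NF_add D (hf 0) (ih _ fun i => hf i.succ)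
  exact this m _ fun i => NF_smul D (hc i) (NF_gens D (hv i))

end DDLemmas

open Pointwise in
/-- The cone `σ̃ ⊆ ℝⁿ × ℝᵏ` is strongly convex: `σ̃ ∩ (−σ̃) = {0}`. -/
theorem tildeSigma_strongly_convex (n k : ℕ) (hk : 1 ≤ k) (D : DeformationDatum n k) :
    tildeSigma D ∩ (-(tildeSigma D)) = ({0} : Set ((Fin n → ℝ) × (Fin k → ℝ))) := by
  ext x
  simp only [Set.mem_inter_iff, Set.mem_neg, Set.mem_singleton_iff]
  constructor
  · rintro ⟨hx, hx'⟩
    obtain ⟨s, hs, t, y, ht, hy, hx1, hx2⟩ := NF_of_mem_tildeSigma D hx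
    obtain ⟨s', hs', t', y', ht', hy', hx1', hx2'⟩ := NF_of_mem_tildeSigma D hx'
    set C : ℝ := t 0 + t' 0 with hCdef
    have hC : ∀ i : Fin (k + 1), t i + t' i = C := by
      intro i
      induction i using Fin.cases with
      | zero => rfl
      | succ j =>
        have h1 := hx2 j
        have h2 := hx2' j
        have h3 : (-x).2 j = -(x.2 j) := rfl
        rw [h3, h1] at h2
        linarith
    have hC0 : 0 ≤ C := add_nonneg (ht 0) (ht' 0)
    rcases eq_or_lt_of_le hC0 with hCz | hCpos
    · -- C = 0, hence all weights vanish
      have htz : ∀ i, t i = 0 ∧ t' i = 0 := by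
        intro i
        have := hC i
        constructor <;> nlinarith [ht i, ht' i]
      have hx1s : x.1 = s := by
        rw [hx1]
        have : ∀ i ∈ Finset.univ, t i • y i = (0 : Fin n → ℝ) := by
          intro i _; rw [(htz i).1, zero_smul]
        rw [Finset.sum_congr rfl this]
        simp
      have hx1s' : (-x).1 = s' := by
        rw [hx1']
        have : ∀ i ∈ Finset.univ, t' i • y' i = (0 : Fin n → ℝ) := by
          intro i _; rw [(htz i).2, zero_smul]
        rw [Finset.sum_congr rfl this]
        simp
      have hmem : x.1 ∈ D.σ ∩ (-D.σ) := by
        refine ⟨hx1s ▸ hs, ?_⟩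
        rw [Set.mem_neg]
        have : -x.1 = s' := hx1s'
        rw [this]
        exact hs'
      rw [D.hsc, Set.mem_singleton_iff] at hmem
      have hx2z : x.2 = 0 := by
        funext j
        have := hx2 j
        rw [this, (htz j.succ).1, (htz 0).1, sub_zero]
        rfl
      exact Prod.ext hmem hx2z
    · -- C > 0: derive a contradiction with 0 ∉ Q
      exfalso
      set z : Fin (k + 1) → (Fin n → ℝ) :=
        fun i => (t i / C) • y i + (t' i / C) • y' i with hzdef
      have hz : ∀ i, z i ∈ D.Qi i := by
        intro i
        exact Qi_convex D i (hy i) (hy' i) (div_nonneg (ht i) hC0)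
          (div_nonneg (ht' i) hC0)
          (by rw [← add_div, hC i, div_self hCpos.ne'])
      have hq : ∑ i, z i ∈ D.Q := by
        rw [D.h3]
        exact mem_set_sum _ _ _ fun i _ => hz i
      have hkey : C • ∑ i, z i = -(s + s') := by
        have hCz : ∀ i, C • z i = t i • y i + t' i • y' i := by
          intro i
          rw [hzdef]
          simp only [smul_add, smul_smul]
          rw [mul_div_cancel₀ _ hCpos.ne', mul_div_cancel₀ _ hCpos.ne']
        have hsum : (0 : Fin n → ℝ) = s + s' + C • ∑ i, z i := by
          have h0 : x.1 + (-x).1 = 0 := by simp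
          rw [hx1, hx1'] at h0
          rw [Finset.smul_sum, Finset.sum_congr rfl (fun i _ => hCz i),
            Finset.sum_add_distrib]
          linear_combination (norm := module) -h0
        linear_combination (norm := module) -hsum
      have hmem : C • ∑ i, z i ∈ D.σ ∩ (-D.σ) := by
        constructor
        · exact sigma_smul_mem D hC0 (D.h1 hq)
        · rw [Set.mem_neg, hkey, neg_neg]
          exact sigma_add_mem D hs hs'
      rw [D.hsc, Set.mem_singleton_iff] at hmem
      have : ∑ i, z i = 0 := by
        have := smul_eq_zero.mp hmem
        rcases this with h | h
        · exact absurd h hCpos.ne'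
        · exact h
      exact D.h2 (this ▸ hq)
  · rintro rfl
    have h0 : (0 : (Fin n → ℝ) × (Fin k → ℝ)) ∈ tildeSigma D := zero_mem_coneHull
    exact ⟨h0, by simpa using h0⟩
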